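/- (Claim II) Let n, d >= 1 and let A = {a_1, ..., a_n} and B = {b_1, ..., b_n} be sequences of vectors in {0,1}^d. Over the alphabet {0,1,#,[,]}, define W = [psi_A(ONE)][psi_A(ZERO)][psi_A(a_1)][psi_A(ZERO)][psi_A(a_2)][psi_A(ZERO)]...[psi_A(a_n)][psi_A(ZERO)][psi_A(ONE)] and U = [psi_B(ONE)][psi_B(b_1)][psi_B(b_2)]...[psi_B(b_n)][psi_B(ONE)], where ZERO and ONE are the all-zero and all-one vectors of dimension d. Then there exist i, j in [1:n] such that a_i and b_j are orthogonal if and only if U is a |W|-subsequence of WW. -/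

import Mathlib

open List

/-- `v` is a `p`-subsequence of `w`: there is a contiguous factor `u` of `w`
of length at most `p` such that `v` is a subsequence of `u`. -/
def PSubseq {α : Type*} (p : ℕ) (v w : List α) : Prop :=
  ∃ u : List α, u <:+: w ∧ u.length ≤ p ∧ v <+ u

/-- The alphabet {0, 1, #, [, ]}. -/
inductive Letter5 : Type
  | zero : Letter5
  | one : Letter5
  | hash : Letter5
  | lb : Letter5
  | rb : Letter5
deriving DecidableEq

/-- `psi_A(0) = 01#`, `psi_A(1) = 00#`. -/
def psiA : Bool → List Letter5
  | false => [.zero, .one, .hash]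
  | true => [.zero, .zero, .hash]

/-- `psi_B(0) = 0#`, `psi_B(1) = 1#`. -/
def psiB : Bool → List Letter5
  | false => [.zero, .hash]
  | true => [.one, .hash]

/-- `psi_A` applied letterwise to a vector in `{0,1}^d`. -/
def psiAvec {d : ℕ} (v : Fin d → Bool) : List Letter5 :=
  (List.ofFn (fun k => psiA (v k))).flatten

/-- `psi_B` applied letterwise to a vector in `{0,1}^d`. -/
def psiBvec {d : ℕ} (v : Fin d → Bool) : List Letter5 :=
  (List.ofFn (fun k => psiB (v k))).flatten

/-- The block `[psi_A(v)]`. -/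
def blockA {d : ℕ} (v : Fin d → Bool) : List Letter5 :=
  Letter5.lb :: (psiAvec v ++ [Letter5.rb])

/-- The block `[psi_B(v)]`. -/
def blockB {d : ℕ} (v : Fin d → Bool) : List Letter5 :=
  Letter5.lb :: (psiBvec v ++ [Letter5.rb])

/-- The word `W = [psi_A(1)][psi_A(0)][psi_A(a_1)][psi_A(0)]...[psi_A(a_n)][psi_A(0)][psi_A(1)]`. -/
def wordW {n d : ℕ} (a : Fin n → Fin d → Bool) : List Letter5 :=
  blockA (fun _ : Fin d => true) ++ blockA (fun _ : Fin d => false) ++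
    (List.ofFn (fun i : Fin n => blockA (a i) ++ blockA (fun _ : Fin d => false))).flatten ++
    blockA (fun _ : Fin d => true)

/-- The word `U = [psi_B(1)][psi_B(b_1)]...[psi_B(b_n)][psi_B(1)]`. -/
def wordU {n d : ℕ} (b : Fin n → Fin d → Bool) : List Letter5 :=
  blockB (fun _ : Fin d => true) ++ (List.ofFn (fun j : Fin n => blockB (b j))).flatten ++
    blockB (fun _ : Fin d => true)

/-!
Both words are sequences of bracketed blocks: `W` has block sequence `1, 0, a₁, 0, …, aₙ, 0, 1`
and `U` has `1, b₁, …, bₙ, 1`. A block `[ψ_B(v)]` is a subsequence of `[ψ_A(w)]` exactly when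
`v` and `w` are orthogonal: both contain `d` letters `#`, so the `k`-th pair `x#` of `ψ_B(v)` has
to land in the `k`-th triple of `ψ_A(w)`, and `1#` fits into `01#` but not into `00#`.

If `aᵢ ⊥ bⱼ`, some rotation of the block sequence of `W`, which is a factor of `WW` of length
`|W|`, has at least `j` zero blocks before `aᵢ` and `n - j + 1` after it: send `bⱼ` to `aᵢ` and
every other block of `U` to a zero block of its own.

Conversely, brackets occur in `WW` only at block boundaries, so an embedding of `U` into a factor
of `WW` of length at most `|W|` sends the `n + 2` blocks of `U` into disjoint runs of consecutive
blocks inside a factor of at most `2n + 3` blocks. Without orthogonal pairs every run contains a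
zero block: a run of one block must be orthogonal to its block of `U`, and a longer run without
zero blocks consists of all-one blocks, which contain no letter `1`. But a factor of `WW` that is
no longer than `W` contains at most as many zero blocks as `W`, namely `n + 1`.
-/

namespace List

variable {α : Type*}

theorem exists_eq_append_cons_of_append_cons_sublist {l₁ l₂ l : List α} {a : α}
    (h : l₁ ++ a :: l₂ <+ l) : ∃ r₁ r₂, l = r₁ ++ a :: r₂ ∧ l₁ <+ r₁ ∧ l₂ <+ r₂ := by
  obtain ⟨r₁, r₂, rfl, h₁, h₂⟩ := append_sublist_iff.mp h
  obtain ⟨s₁, s₂, rfl, ha, h₃⟩ := cons_sublist_iff.mp h₂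
  obtain ⟨t₁, t₂, rfl⟩ := append_of_mem ha
  exact ⟨r₁ ++ t₁, t₂ ++ s₂, by simp, h₁.trans (sublist_append_left _ _),
    h₃.trans (sublist_append_right _ _)⟩

theorem cons_sublist_of_cons_sublist_append {a : α} {l P S : List α} (ha : a ∉ P)
    (h : a :: l <+ P ++ S) : a :: l <+ S := by
  obtain ⟨_ | ⟨b, l₁⟩, l₂, hl, h₁, h₂⟩ := sublist_append_iff.mp h
  · simpa [hl] using h₂
  · obtain ⟨rfl, -⟩ := cons_eq_cons.mp hl
    exact absurd (h₁.subset (mem_cons_self ..)) ha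

theorem IsChain.forall_mem_of_and {p : α → Prop} :
    ∀ {x y : α} {l : List α}, IsChain (fun a b => p a ∧ p b) (x :: y :: l) →
      ∀ z ∈ x :: y :: l, p z
  | _, _, [], h, z, hz => by
    have := (isChain_cons_cons.mp h).1
    simp only [mem_cons, not_mem_nil, or_false] at hz
    rcases hz with rfl | rfl <;> tauto
  | _, _, _ :: _, h, z, hz => by
    obtain ⟨hxy, h'⟩ := isChain_cons_cons.mp h
    rcases mem_cons.mp hz with rfl | hz
    exacts [hxy.1, h'.forall_mem_of_and z hz]

theorem IsRotated.infix_append_self {l l' : List α} (h : l ~r l') : l' <:+: l ++ l := by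
  obtain ⟨k, hk, rfl⟩ := isRotated_iff_mod.mp h
  rw [rotate_eq_drop_append_take hk]
  refine ⟨take k l, drop k l, ?_⟩
  rw [← append_assoc, take_append_drop, append_assoc, take_append_drop]

variable [BEq α]

theorem count_le_of_infix_append_self {a : α} {x l : List α} (h : x <:+: l ++ l)
    (hx : x.length ≤ l.length) : count a x ≤ count a l := by
  obtain ⟨s, t, hst⟩ := h
  rw [append_assoc] at hst
  rcases append_eq_append_iff.mp hst with ⟨c, rfl, hxt⟩ | ⟨c, rfl, hl⟩
  · have hx' : x <+: c ++ s :=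
      prefix_of_prefix_length_le ⟨t, hxt⟩ ⟨c, by simp⟩ (by simpa [add_comm] using hx)
    simpa [count_append, add_comm] using hx'.sublist.count_le a
  · exact (infix_append' c x t).sublist.count_le a |>.trans_eq (by rw [hl])

variable [LawfulBEq α]

theorem exists_append_eq_of_add_le_count {a : α} {l : List α} {p q : ℕ}
    (h : p + q ≤ count a l) : ∃ l₁ l₂, l = l₁ ++ l₂ ∧ p ≤ count a l₁ ∧ q ≤ count a l₂ := by
  rw [← replicate_sublist_iff, replicate_add] at h
  obtain ⟨l₁, l₂, rfl, h₁, h₂⟩ := append_sublist_iff.mp h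
  exact ⟨l₁, l₂, rfl, replicate_sublist_iff.mp h₁, replicate_sublist_iff.mp h₂⟩

theorem exists_isRotated_of_add_le_count {x z : α} {l P S : List α} {p q : ℕ}
    (hl : l = P ++ x :: S) (h : p + q ≤ count z (S ++ P)) :
    ∃ X Y, X ++ x :: Y ~r l ∧ p ≤ count z X ∧ q ≤ count z Y := by
  subst hl
  obtain ⟨Y, X, hYX, hY, hX⟩ := exists_append_eq_of_add_le_count (add_comm p q ▸ h)
  refine ⟨X, Y, isRotated_append.trans ?_, hX, hY⟩
  rw [cons_append, ← hYX, ← cons_append]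
  exact isRotated_append

theorem count_flatMap_pair (z : α) (l : List α) :
    count z (l.flatMap fun x => [x, z]) = count z l + l.length := by
  induction l with
  | nil => rfl
  | cons x l ih =>
    simp only [flatMap_cons, cons_append, nil_append, count_cons, beq_self_eq_true, if_true, ih,
      length_cons]
    split_ifs <;> omega

theorem Forall₂.length_le_count_flatten {β : Type*} {R : β → List α → Prop} {a : α}
    {l : List β} {L : List (List α)} (h : Forall₂ R l L)
    (hR : ∀ x ∈ l, ∀ I ∈ L, R x I → a ∈ I) : l.length ≤ count a L.flatten := by
  induction h with
  | nil => simp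
  | cons hxI _ ih =>
    have hpos := count_pos_iff.mpr (hR _ (mem_cons_self ..) _ (mem_cons_self ..) hxI)
    have := ih fun x hx I hI => hR x (mem_cons_of_mem _ hx) I (mem_cons_of_mem _ hI)
    simp only [length_cons, flatten_cons, count_append]
    omega

end List

def bracket (w : List Letter5) : List Letter5 := .lb :: (w ++ [.rb])

def bracketed {β : Type*} (enc : β → List Letter5) (l : List β) : List Letter5 :=
  l.flatMap fun x => bracket (enc x)

section Bracketed

variable {β γ : Type*} {enc : β → List Letter5} {encB : γ → List Letter5}

@[simp] theorem bracketed_nil : bracketed enc [] = [] := rfl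

@[simp] theorem bracketed_cons (x : β) (l : List β) :
    bracketed enc (x :: l) = bracket (enc x) ++ bracketed enc l := rfl

@[simp] theorem bracketed_append (l₁ l₂ : List β) :
    bracketed enc (l₁ ++ l₂) = bracketed enc l₁ ++ bracketed enc l₂ := flatMap_append

theorem bracket_sublist_bracket_iff {v w : List Letter5} : bracket v <+ bracket w ↔ v <+ w := by
  simp [bracket, append_sublist_append_right]

theorem length_bracketed {c : ℕ} (h : ∀ x, (enc x).length = c) (l : List β) :
    (bracketed enc l).length = l.length * (c + 2) := by
  induction l with
  | nil => simp
  | cons x l ih =>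
    simp only [bracketed_cons, bracket, cons_append, append_assoc, nil_append, length_cons,
      length_append, h, ih]
    ring

theorem List.IsInfix.bracketed {l₁ l₂ : List β} (h : l₁ <:+: l₂) :
    bracketed enc l₁ <:+: bracketed enc l₂ :=
  h.flatMap _

theorem bracketed_sublist_of_le_count [DecidableEq β] {z : β} (hz : ∀ u, encB u <+ enc z) :
    ∀ {us : List γ} {vs : List β}, us.length ≤ count z vs →
      bracketed encB us <+ bracketed enc vs
  | [], _, _ => nil_sublist _
  | u :: us, vs, h => by
    rw [← replicate_sublist_iff, length_cons, replicate_succ] at h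
    obtain ⟨r₁, r₂, rfl, hz₁, h₂⟩ := cons_sublist_iff.mp h
    rw [bracketed_cons, bracketed_append]
    refine Sublist.append ?_ (bracketed_sublist_of_le_count hz (replicate_sublist_iff.mp h₂))
    exact (bracket_sublist_bracket_iff.mpr (hz u)).trans
      (infix_of_mem_flatten (mem_map_of_mem (f := fun x => bracket (enc x)) hz₁)).sublist

theorem exists_append_eq_of_bracketed_eq_append_lb (hlb : ∀ x, .lb ∉ enc x) :
    ∀ {vs : List β} {S M : List Letter5}, bracketed enc vs = S ++ .lb :: M →
      ∃ vs₁ vs₂, vs = vs₁ ++ vs₂ ∧ bracketed enc vs₂ = .lb :: M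
  | [], S, M, h => by simp at h
  | x :: vs, [], M, h => ⟨[], x :: vs, rfl, h⟩
  | x :: vs, _ :: S, M, h => by
    simp only [bracketed_cons, bracket, cons_append, cons.injEq] at h
    rcases append_eq_append_iff.mp h.2 with ⟨c, rfl, hc⟩ | ⟨_ | ⟨c, c'⟩, hc, hM⟩
    · obtain ⟨vs₁, vs₂, rfl, h₂⟩ := exists_append_eq_of_bracketed_eq_append_lb hlb hc
      exact ⟨x :: vs₁, vs₂, rfl, h₂⟩
    · exact ⟨[x], vs, rfl, by simpa using hM.symm⟩
    · obtain ⟨rfl, -⟩ := cons_eq_cons.mp hM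
      have : Letter5.lb ∈ enc x ++ [.rb] := hc ▸ mem_append_right _ (mem_cons_self ..)
      simp [hlb x] at this

theorem exists_append_eq_of_bracketed_eq_append_rb (hrb : ∀ x, .rb ∉ enc x) :
    ∀ {vs : List β} {P G : List Letter5}, bracketed enc vs = P ++ .rb :: G →
      ∃ vs₁ vs₂, vs = vs₁ ++ vs₂ ∧ bracketed enc vs₁ = P ++ [.rb] ∧ bracketed enc vs₂ = G
  | [], P, G, h => by simp at h
  | x :: vs, [], G, h => by simp [bracket] at h
  | x :: vs, _ :: P, G, h => by
    simp only [bracketed_cons, bracket, cons_append, append_assoc, cons.injEq] at h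
    obtain ⟨rfl, h⟩ := h
    rcases append_eq_append_iff.mp h with ⟨_ | ⟨c, c'⟩, rfl, hc⟩ | ⟨_ | ⟨c, c'⟩, hc, hG⟩
    · exact ⟨[x], vs, rfl, by simp [bracket], by simpa using hc⟩
    · simp only [cons_append, cons.injEq] at hc
      obtain ⟨rfl, hc⟩ := hc
      obtain ⟨vs₁, vs₂, rfl, h₁, h₂⟩ := exists_append_eq_of_bracketed_eq_append_rb hrb hc
      exact ⟨x :: vs₁, vs₂, rfl, by simp [bracket, h₁], h₂⟩
    · exact ⟨[x], vs, rfl, by simp [bracket, hc], by simpa using hG.symm⟩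
    · simp only [cons_append, cons.injEq] at hG
      obtain ⟨rfl, -⟩ := hG
      exact absurd (hc ▸ mem_append_right _ (mem_cons_self ..)) (hrb x)

theorem exists_eq_lb_cons_append_rb (enc : β → List Letter5) {l : List β} (hl : l ≠ []) :
    ∃ M, bracketed enc l = .lb :: (M ++ [.rb]) := by
  obtain ⟨x, l, rfl⟩ := exists_cons_of_ne_nil hl
  rcases eq_nil_or_concat l with rfl | ⟨L, y, rfl⟩
  · exact ⟨enc x, by simp [bracket]⟩
  · exact ⟨enc x ++ .rb :: (bracketed enc L ++ .lb :: enc y), by simp [bracket]⟩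

theorem exists_infix_bracketed_of_sublist (hlb : ∀ x, .lb ∉ enc x) (hrb : ∀ x, .rb ∉ enc x)
    {us : List γ} {u : List Letter5} {vs : List β} (hus : us ≠ [])
    (hsub : bracketed encB us <+ u) (hu : u <:+: bracketed enc vs) :
    ∃ vs', vs' <:+: vs ∧ bracketed encB us <+ bracketed enc vs' ∧
      (bracketed enc vs').length ≤ u.length := by
  obtain ⟨M, hM⟩ := exists_eq_lb_cons_append_rb encB hus
  rw [hM] at hsub ⊢
  obtain ⟨u₁, u₂, rfl, -, hM⟩ := exists_eq_append_cons_of_append_cons_sublist (l₁ := []) hsub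
  obtain ⟨u₃, u₄, rfl, hM, -⟩ := exists_eq_append_cons_of_append_cons_sublist (l₂ := []) hM
  obtain ⟨s, t, hst⟩ := hu
  obtain ⟨vs₁, vs₂, rfl, h₂⟩ := exists_append_eq_of_bracketed_eq_append_lb hlb
    (S := s ++ u₁) (M := u₃ ++ .rb :: (u₄ ++ t)) (by rw [← hst]; simp)
  obtain ⟨vs₃, vs₄, rfl, h₃, -⟩ := exists_append_eq_of_bracketed_eq_append_rb hrb
    (P := .lb :: u₃) (G := u₄ ++ t) (by rw [h₂]; simp)
  refine ⟨vs₃, ⟨vs₁, vs₄, by simp⟩, ?_, ?_⟩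
  · rw [h₃]
    exact (hM.append_right [.rb]).cons_cons _
  · rw [h₃]
    simp only [cons_append, length_cons, length_append, length_nil]
    omega

theorem exists_forall₂_of_bracketed_sublist (hrb : ∀ x, .rb ∉ enc x) :
    ∀ {us : List γ} {ws : List β}, bracketed encB us <+ bracketed enc ws →
      ∃ Is : List (List β), Is.flatten <+: ws ∧
        Forall₂ (fun u I => bracket (encB u) <+ bracketed enc I) us Is
  | [], _, _ => ⟨[], nil_prefix, .nil⟩
  | u :: us, ws, h => by
    rw [bracketed_cons, bracket, show Letter5.lb :: (encB u ++ [.rb]) ++ bracketed encB us =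
      (.lb :: encB u) ++ .rb :: bracketed encB us by simp] at h
    obtain ⟨r₁, r₂, hr, h₁, h₂⟩ := exists_eq_append_cons_of_append_cons_sublist h
    obtain ⟨ws₁, ws₂, rfl, hws₁, hws₂⟩ := exists_append_eq_of_bracketed_eq_append_rb hrb hr
    obtain ⟨Is, hIs, hf⟩ := exists_forall₂_of_bracketed_sublist hrb (hws₂ ▸ h₂)
    refine ⟨ws₁ :: Is, by simpa using hIs, .cons ?_ hf⟩
    rw [hws₁, bracket, ← cons_append]
    exact h₁.append_right _

end Bracketed

section Encoding

variable {d : ℕ}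

theorem disjoint_iff_forall_and_eq_false {w v : Fin d → Bool} :
    Disjoint w v ↔ ∀ k, (w k && v k) = false := by
  rw [Pi.disjoint_iff]
  exact forall_congr' fun _ => disjoint_iff

theorem psiB_sublist_psiA {x y : Bool} (h : (x && y) = false) : psiB y <+ psiA x := by
  cases x <;> cases y <;> simp_all [psiA, psiB]

theorem count_hash_flatMap_psiA (l : List Bool) : (l.flatMap psiA).count .hash = l.length := by
  induction l with
  | nil => rfl
  | cons x l ih => cases x <;> simp [psiA, ih]

theorem count_hash_flatMap_psiB (l : List Bool) : (l.flatMap psiB).count .hash = l.length := by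
  induction l with
  | nil => rfl
  | cons x l ih => cases x <;> simp [psiB, ih]

theorem flatMap_psiB_sublist_flatMap_psiA_iff :
    ∀ {xs ys : List Bool}, xs.length = ys.length →
      (ys.flatMap psiB <+ xs.flatMap psiA ↔ Forall₂ (fun x y => (x && y) = false) xs ys)
  | [], [], _ => by simp
  | x :: xs, y :: ys, hlen => by
    rw [flatMap_cons, flatMap_cons, forall₂_cons,
      ← flatMap_psiB_sublist_flatMap_psiA_iff (by simpa using hlen)]
    constructor
    · intro h
      have htail : ys.flatMap psiB <+ xs.flatMap psiA := by
        have hy : .hash :: ys.flatMap psiB <+ psiB y ++ ys.flatMap psiB := by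
          cases y <;> simp [psiB]
        refine cons_sublist_cons.mp (cons_sublist_of_cons_sublist_append (a := .hash)
          (P := [.zero, if x then .zero else .one]) (by cases x <;> decide) ?_)
        cases x <;> simpa [psiA] using hy.trans h
      refine ⟨?_, htail⟩
      by_contra hxy
      obtain ⟨rfl, rfl⟩ : x = true ∧ y = true := by simpa using hxy
      have h₁ : .one :: .hash :: ys.flatMap psiB <+ xs.flatMap psiA :=
        cons_sublist_of_cons_sublist_append (P := psiA true) (by decide) h
      have := h₁.count_le .hash
      rw [count_cons_of_ne (by decide), count_cons_self, count_hash_flatMap_psiB,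
        count_hash_flatMap_psiA] at this
      simp only [length_cons] at hlen
      omega
    · rintro ⟨hxy, h⟩
      exact (psiB_sublist_psiA hxy).append h
  | [], _ :: _, h | _ :: _, [], h => by simp at h

theorem psiAvec_eq_flatMap (v : Fin d → Bool) : psiAvec v = (ofFn v).flatMap psiA := by
  simp only [psiAvec, flatMap, map_ofFn]
  rfl

theorem psiBvec_eq_flatMap (v : Fin d → Bool) : psiBvec v = (ofFn v).flatMap psiB := by
  simp only [psiBvec, flatMap, map_ofFn]
  rfl

theorem psiBvec_sublist_psiAvec_iff {v w : Fin d → Bool} :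
    psiBvec v <+ psiAvec w ↔ Disjoint w v := by
  rw [psiAvec_eq_flatMap, psiBvec_eq_flatMap, flatMap_psiB_sublist_flatMap_psiA_iff (by simp),
    forall₂_iff_get, disjoint_iff_forall_and_eq_false]
  simp [Fin.forall_iff]

theorem length_psiAvec (v : Fin d → Bool) : (psiAvec v).length = 3 * d := by
  rw [psiAvec_eq_flatMap, length_flatMap]
  have : ∀ x, (psiA x).length = 3 := by decide
  simp [this, Function.comp_def, mul_comm]

theorem lb_not_mem_psiAvec (v : Fin d → Bool) : .lb ∉ psiAvec v := by
  rw [psiAvec_eq_flatMap]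
  simp only [mem_flatMap, not_exists, not_and]
  intro x _
  cases x <;> decide

theorem rb_not_mem_psiAvec (v : Fin d → Bool) : .rb ∉ psiAvec v := by
  rw [psiAvec_eq_flatMap]
  simp only [mem_flatMap, not_exists, not_and]
  intro x _
  cases x <;> decide

theorem one_mem_psiBvec {v : Fin d → Bool} (hv : v ≠ ⊥) : .one ∈ psiBvec v := by
  obtain ⟨k, hk⟩ : ∃ k, v k = true := by
    by_contra! h
    exact hv (funext fun k => by simpa using h k)
  rw [psiBvec_eq_flatMap, mem_flatMap]
  exact ⟨true, hk ▸ mem_ofFn.mpr ⟨k, rfl⟩, by simp [psiB]⟩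

theorem one_not_mem_psiAvec_top : .one ∉ psiAvec (⊤ : Fin d → Bool) := by
  simp [psiAvec, psiA]

end Encoding

section Blocks

variable {n d : ℕ}

-- `ZERO` and `ONE` are `⊥` and `⊤` of the Boolean algebra `Fin d → Bool`, in which orthogonality
-- is `Disjoint`.
def blocksW (a : Fin n → Fin d → Bool) : List (Fin d → Bool) :=
  ⊤ :: ⊥ :: (ofFn a).flatMap (fun x => [x, ⊥]) ++ [⊤]

def blocksU (b : Fin n → Fin d → Bool) : List (Fin d → Bool) :=
  ⊤ :: ofFn b ++ [⊤]

theorem wordW_eq_bracketed (a : Fin n → Fin d → Bool) :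
    wordW a = bracketed psiAvec (blocksW a) := by
  simp only [wordW, blocksW, cons_append, bracketed_cons, bracketed_append, append_assoc]
  rw [bracketed, flatMap_assoc]
  simp only [flatMap, map_cons, map_nil, flatten_cons, flatten_nil, append_nil, map_ofFn,
    Function.comp_def, bracketed_nil]
  rfl

theorem wordU_eq_bracketed (b : Fin n → Fin d → Bool) :
    wordU b = bracketed psiBvec (blocksU b) := by
  simp only [wordU, blocksU, bracketed, flatMap, cons_append, append_assoc, map_cons, map_append,
    map_ofFn, map_nil, flatten_cons, flatten_append, flatten_nil, append_nil]
  rfl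

theorem isChain_blocksW_append_self (a : Fin n → Fin d → Bool) :
    IsChain (fun x y => x = ⊤ ∧ y = ⊤ ∨ x = ⊥ ∨ y = ⊥) (blocksW a ++ blocksW a) := by
  set R : (Fin d → Bool) → (Fin d → Bool) → Prop := fun x y => x = ⊤ ∧ y = ⊤ ∨ x = ⊥ ∨ y = ⊥
  have key : ∀ L T : List (Fin d → Bool), List.IsChain R T →
      List.IsChain R (⊥ :: (L.flatMap (fun x => [x, ⊥]) ++ T)) := by
    intro L T hT
    induction L with
    | nil => exact isChain_cons.mpr ⟨fun _ _ => .inr (.inl rfl), hT⟩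
    | cons x L ih =>
      exact isChain_cons_cons.mpr ⟨.inr (.inl rfl), isChain_cons_cons.mpr ⟨.inr (.inr rfl), ih⟩⟩
  have hWW : blocksW a ++ blocksW a = ⊤ :: ⊥ :: ((ofFn a).flatMap (fun x => [x, ⊥]) ++
      ⊤ :: ⊤ :: ⊥ :: ((ofFn a).flatMap (fun x => [x, ⊥]) ++ [⊤])) := by
    simp [blocksW]
  rw [hWW]
  exact isChain_cons_cons.mpr ⟨.inr (.inr rfl), key _ _ (isChain_cons_cons.mpr ⟨.inl ⟨rfl, rfl⟩,
    isChain_cons_cons.mpr ⟨.inr (.inr rfl), key _ _ (isChain_singleton _)⟩⟩)⟩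

end Blocks

section Reduction

variable {n d : ℕ} {a b : Fin n → Fin d → Bool}

theorem count_bot_blocksW (htop : (⊤ : Fin d → Bool) ≠ ⊥) (ha : ∀ i, a i ≠ ⊥) :
    count ⊥ (blocksW a) = n + 1 := by
  have : count ⊥ (ofFn a) = 0 := count_eq_zero.mpr (by simpa [mem_ofFn] using ha)
  simp [blocksW, count_flatMap_pair, this, htop]

theorem ne_bot_of_mem_blocksU (htop : (⊤ : Fin d → Bool) ≠ ⊥)
    (hno : ∀ i j, ¬Disjoint (a i) (b j)) {u : Fin d → Bool} (hu : u ∈ blocksU b) : u ≠ ⊥ := by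
  simp only [blocksU, cons_append, mem_cons, mem_append, mem_ofFn, not_mem_nil, or_false] at hu
  rcases hu with rfl | ⟨j, rfl⟩ | rfl
  · exact htop
  · exact fun h => hno j j (by rw [h]; exact disjoint_bot_right)
  · exact htop

theorem eq_bot_of_disjoint (htop : (⊤ : Fin d → Bool) ≠ ⊥) (hno : ∀ i j, ¬Disjoint (a i) (b j))
    {u w : Fin d → Bool} (hu : u ∈ blocksU b) (hw : w ∈ blocksW a) (h : Disjoint w u) :
    w = ⊥ := by
  have hu₀ := ne_bot_of_mem_blocksU htop hno hu
  simp only [blocksW, cons_append, mem_cons, mem_append, mem_flatMap, mem_ofFn,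
    not_mem_nil, or_false] at hw
  rcases hw with rfl | rfl | ⟨_, ⟨i, rfl⟩, rfl | rfl⟩ | rfl
  · exact absurd (top_disjoint.mp h) hu₀
  · rfl
  · simp only [blocksU, cons_append, mem_cons, mem_append, mem_ofFn, not_mem_nil, or_false] at hu
    rcases hu with rfl | ⟨j, rfl⟩ | rfl
    · exact absurd (by rw [disjoint_top.mp h]; exact disjoint_bot_left) (hno i i)
    · exact absurd h (hno i j)
    · exact absurd (by rw [disjoint_top.mp h]; exact disjoint_bot_left) (hno i i)
  · rfl
  · exact absurd (top_disjoint.mp h) hu₀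

theorem bot_mem_of_bracket_sublist (htop : (⊤ : Fin d → Bool) ≠ ⊥)
    (hno : ∀ i j, ¬Disjoint (a i) (b j)) {u : Fin d → Bool} {I : List (Fin d → Bool)}
    (hu : u ∈ blocksU b) (hI : I <:+: blocksW a ++ blocksW a)
    (h : bracket (psiBvec u) <+ bracketed psiAvec I) : ⊥ ∈ I := by
  by_contra hbot
  have hone : Letter5.one ∈ bracketed psiAvec I :=
    h.subset (mem_cons_of_mem _ (mem_append_left _ (one_mem_psiBvec
      (ne_bot_of_mem_blocksU htop hno hu))))
  match I, hI, h, hbot, hone with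
  | [], _, _, _, hone => simp at hone
  | [w], hI, h, hbot, _ =>
    have hw : w ∈ blocksW a := by simpa using hI.subset (mem_singleton_self w)
    rw [bracketed_cons, bracketed_nil, append_nil, bracket_sublist_bracket_iff,
      psiBvec_sublist_psiAvec_iff] at h
    exact hbot (by simp [eq_bot_of_disjoint htop hno hu hw h])
  | w₁ :: w₂ :: I, hI, _, hbot, hone =>
    have hchain : IsChain (fun x y => x = ⊤ ∧ y = ⊤) (w₁ :: w₂ :: I) :=
      ((isChain_blocksW_append_self a).infix hI).imp_of_mem_imp fun x y hx hy hxy =>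
        hxy.resolve_right (by rintro (rfl | rfl) <;> contradiction)
    obtain ⟨w, hw, hone⟩ := mem_flatMap.mp hone
    have : Letter5.one ∈ psiAvec w := by simpa [bracket] using hone
    exact one_not_mem_psiAvec_top (hchain.forall_mem_of_and w hw ▸ this)

theorem psubseq_of_disjoint {i j : Fin n} (h : Disjoint (a i) (b j)) :
    PSubseq (wordW a).length (wordU b) (wordW a ++ wordW a) := by
  obtain ⟨s, t, hst⟩ := append_of_mem (mem_ofFn.mpr ⟨i, rfl⟩ : a i ∈ ofFn a)
  obtain ⟨s', t', hst'⟩ := append_of_mem (mem_ofFn.mpr ⟨j, rfl⟩ : b j ∈ ofFn b)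
  have hn := congrArg length hst
  have hn' := congrArg length hst'
  simp only [length_ofFn, length_append, length_cons] at hn hn'
  have hW : blocksW a = (⊤ :: ⊥ :: s.flatMap fun x => [x, ⊥]) ++
      a i :: (⊥ :: (t.flatMap fun x => [x, ⊥]) ++ [⊤]) := by
    simp [blocksW, hst]
  obtain ⟨X, Y, hrot, hX, hY⟩ := exists_isRotated_of_add_le_count (z := ⊥)
    (p := (⊤ :: s').length) (q := (t' ++ [⊤]).length) hW (by
      simp only [length_cons, length_append, length_nil, cons_append, count_append, count_cons,
        beq_self_eq_true, if_true, count_nil, count_flatMap_pair]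
      split_ifs <;> omega)
  have hlen := length_bracketed (length_psiAvec (d := d))
  refine ⟨bracketed psiAvec (X ++ a i :: Y), ?_, ?_, ?_⟩
  · rw [wordW_eq_bracketed, ← bracketed_append]
    exact hrot.symm.infix_append_self.bracketed
  · rw [wordW_eq_bracketed, hlen, hlen, hrot.perm.length_eq]
  · have hU : blocksU b = (⊤ :: s') ++ b j :: (t' ++ [⊤]) := by simp [blocksU, hst']
    have hz : ∀ u : Fin d → Bool, psiBvec u <+ psiAvec ⊥ :=
      fun _ => psiBvec_sublist_psiAvec_iff.mpr disjoint_bot_left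
    rw [wordU_eq_bracketed, hU, bracketed_append, bracketed_cons, bracketed_append,
      bracketed_cons]
    exact (bracketed_sublist_of_le_count hz hX).append <|
      (bracket_sublist_bracket_iff.mpr (psiBvec_sublist_psiAvec_iff.mpr h)).append <|
        bracketed_sublist_of_le_count hz hY

theorem exists_disjoint_of_psubseq (hd : 1 ≤ d)
    (h : PSubseq (wordW a).length (wordU b) (wordW a ++ wordW a)) :
    ∃ i j, Disjoint (a i) (b j) := by
  by_contra! hno
  have htop : (⊤ : Fin d → Bool) ≠ ⊥ := by
    have : Nonempty (Fin d) := ⟨⟨0, hd⟩⟩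
    exact top_ne_bot
  obtain ⟨u, hu, hlen, hsub⟩ := h
  rw [wordW_eq_bracketed, ← bracketed_append] at hu
  rw [wordU_eq_bracketed] at hsub
  obtain ⟨vs, hvs, hUvs, hvs_len⟩ := exists_infix_bracketed_of_sublist lb_not_mem_psiAvec
    rb_not_mem_psiAvec (by simp [blocksU]) hsub hu
  have hvs_le : vs.length ≤ (blocksW a).length := by
    have := hvs_len.trans hlen
    rw [wordW_eq_bracketed, length_bracketed length_psiAvec,
      length_bracketed length_psiAvec] at this
    exact Nat.le_of_mul_le_mul_right this (by omega)
  obtain ⟨Is, hIs, hf⟩ := exists_forall₂_of_bracketed_sublist rb_not_mem_psiAvec hUvs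
  have hlow := hf.length_le_count_flatten fun u hu I hI hsub =>
    bot_mem_of_bracket_sublist htop hno hu
      (((infix_of_mem_flatten hI).trans hIs.isInfix).trans hvs) hsub
  have hup := count_le_of_infix_append_self (a := ⊥) hvs hvs_le
  rw [count_bot_blocksW htop fun i hi => hno i i (by rw [hi]; exact disjoint_bot_left)] at hup
  have hmid := hIs.sublist.count_le ⊥
  simp only [blocksU, cons_append, length_cons, length_append, length_ofFn, length_nil] at hlow
  omega

end Reduction

theorem orthogonal_vectors_iff_U_psubseq_WW_general {n d : ℕ} (hd : 1 ≤ d)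
    (a b : Fin n → Fin d → Bool) :
    (∃ i j : Fin n, ∀ k, (a i k && b j k) = false) ↔
      PSubseq (wordW a).length (wordU b) (wordW a ++ wordW a) := by
  simp only [← disjoint_iff_forall_and_eq_false]
  exact ⟨fun ⟨_, _, h⟩ => psubseq_of_disjoint h, exists_disjoint_of_psubseq hd⟩

/-- (Claim II) There are orthogonal vectors `a_i ∈ A` and `b_j ∈ B` iff
`U` is a `|W|`-subsequence of `WW`. -/
theorem orthogonal_vectors_iff_U_psubseq_WW {n d : ℕ} (hn : 1 ≤ n) (hd : 1 ≤ d)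
    (a b : Fin n → Fin d → Bool) :
    (∃ i j : Fin n, ∀ k, (a i k && b j k) = false) ↔
      PSubseq (wordW a).length (wordU b) (wordW a ++ wordW a) :=
  orthogonal_vectors_iff_U_psubseq_WW_general hd a b
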